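/- arXiv:math/0309096 — 2 statements merged into one kernel-verified Lean document; each statement's English description precedes it below -/
import Mathlib

section
/- Let (E, 𝒜, μ) be a measure space, let φ : E → ℝ be measurable with φ > 0 μ-almost everywhere and with φ² integrable with respect to μ, and let g : E → ℝ be measurable with g² integrable with respect to μ. For n ≥ 1 set ψ_n(x) = max(φ(x), 1/n). Then lim_{n→∞} (1/n²) · [ ∫ φ(x)²/ψ_n(x)² dμ(x) + ∫ g(x)² φ(x)²/ψ_n(x)⁴ dμ(x) ] = 0. -/
open MeasureTheory Filter

/-- Analytic core of the capacity estimate `Cap_φ(φ ≤ 1/n) → 0`: with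
`ψ_n = max (φ, 1/n)`, the quantity
`(1/n²) (∫ φ²/ψ_n² dμ + ∫ g² φ²/ψ_n⁴ dμ)` tends to `0`. -/
theorem capacity_estimate_core
    {E : Type*} [MeasurableSpace E] (μ : Measure E)
    (φ g : E → ℝ)
    (hφm : Measurable φ) (hφpos : ∀ᵐ x ∂μ, 0 < φ x)
    (hφ2 : Integrable (fun x => φ x ^ 2) μ)
    (hgm : Measurable g) (hg2 : Integrable (fun x => g x ^ 2) μ) :
    Tendsto
      (fun n : ℕ =>
        (1 / (n : ℝ) ^ 2) *
          ((∫ x, φ x ^ 2 / max (φ x) (1 / (n : ℝ)) ^ 2 ∂μ) +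
            ∫ x, g x ^ 2 * φ x ^ 2 / max (φ x) (1 / (n : ℝ)) ^ 4 ∂μ))
      atTop (nhds 0) := by
  have hψm : ∀ n : ℕ, Measurable (fun x => max (φ x) (1 / (n : ℝ))) :=
    fun n => hφm.max measurable_const
  set F : ℕ → E → ℝ := fun n x =>
    φ x ^ 2 / ((n : ℝ) ^ 2 * max (φ x) (1 / (n : ℝ)) ^ 2) +
      g x ^ 2 * φ x ^ 2 / ((n : ℝ) ^ 2 * max (φ x) (1 / (n : ℝ)) ^ 4) with hFdef
  -- dominated convergence for ∫ F n
  have hFmeas : ∀ n : ℕ, AEStronglyMeasurable (F n) μ := by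
    intro n
    refine (((hφm.pow_const 2).div
        (measurable_const.mul ((hψm n).pow_const 2))).add
      (((hgm.pow_const 2).mul (hφm.pow_const 2)).div
        (measurable_const.mul ((hψm n).pow_const 4)))).aestronglyMeasurable
  have hbound_int : Integrable (fun x => φ x ^ 2 + g x ^ 2) μ := hφ2.add hg2
  have h_bound : ∀ n : ℕ, ∀ᵐ x ∂μ, ‖F n x‖ ≤ φ x ^ 2 + g x ^ 2 := by
    intro n
    rcases Nat.eq_zero_or_pos n with h0 | h1
    · subst h0
      filter_upwards with x
      have : F 0 x = 0 := by simp [hFdef]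
      rw [this, norm_zero]
      positivity
    · filter_upwards [hφpos] with x hx
      have hnpos : (0 : ℝ) < n := by exact_mod_cast h1
      have hψpos : 0 < max (φ x) (1 / (n : ℝ)) := lt_of_lt_of_le hx (le_max_left _ _)
      have h1' : 1 ≤ (n : ℝ) * max (φ x) (1 / (n : ℝ)) := by
        have h := le_max_right (φ x) (1 / (n : ℝ))
        rw [div_le_iff₀ hnpos] at h
        nlinarith
      have hsq : 1 ≤ (n : ℝ) ^ 2 * max (φ x) (1 / (n : ℝ)) ^ 2 := by nlinarith
      have hφψ : φ x ^ 2 ≤ max (φ x) (1 / (n : ℝ)) ^ 2 :=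
        pow_le_pow_left₀ hx.le (le_max_left _ _) 2
      have e1 : φ x ^ 2 / ((n : ℝ) ^ 2 * max (φ x) (1 / (n : ℝ)) ^ 2) ≤ φ x ^ 2 :=
        div_le_self (sq_nonneg _) hsq
      have hψ4 : max (φ x) (1 / (n : ℝ)) ^ 2 ≤ (n : ℝ) ^ 2 * max (φ x) (1 / (n : ℝ)) ^ 4 := by
        nlinarith [sq_nonneg (max (φ x) (1 / (n : ℝ)))]
      have e2 : g x ^ 2 * φ x ^ 2 / ((n : ℝ) ^ 2 * max (φ x) (1 / (n : ℝ)) ^ 4) ≤ g x ^ 2 := by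
        rw [div_le_iff₀ (by positivity)]
        nlinarith [mul_le_mul_of_nonneg_left (hφψ.trans hψ4) (sq_nonneg (g x))]
      have hF0 : 0 ≤ F n x := by
        simp only [hFdef]
        positivity
      rw [Real.norm_eq_abs, abs_of_nonneg hF0]
      simp only [hFdef]
      exact add_le_add e1 e2
  have h_lim : ∀ᵐ x ∂μ, Tendsto (fun n : ℕ => F n x) atTop (nhds 0) := by
    filter_upwards [hφpos] with x hx
    have hφne : φ x ≠ 0 := ne_of_gt hx
    have hev : (fun n : ℕ => (1 / (n : ℝ) ^ 2) * (1 + g x ^ 2 / φ x ^ 2)) =ᶠ[atTop]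
        fun n : ℕ => F n x := by
      have h1 : ∀ᶠ n : ℕ in atTop, 1 / (n : ℝ) < φ x :=
        tendsto_one_div_atTop_nhds_zero_nat.eventually (eventually_lt_nhds hx)
      filter_upwards [h1, eventually_ge_atTop 1] with n hn1 hn
      have hn0 : (n : ℝ) ≠ 0 := by
        have : (0 : ℝ) < n := by exact_mod_cast hn
        exact ne_of_gt this
      have hmax : max (φ x) (1 / (n : ℝ)) = φ x := max_eq_left hn1.le
      simp only [hFdef, hmax]
      field_simp
    have hbase : Tendsto (fun n : ℕ => (1 / (n : ℝ) ^ 2) * (1 + g x ^ 2 / φ x ^ 2))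
        atTop (nhds 0) := by
      have h := (tendsto_one_div_atTop_nhds_zero_nat.pow 2).mul_const
        (1 + g x ^ 2 / φ x ^ 2)
      simpa [one_div_pow] using h
    exact hbase.congr' hev
  have hDC : Tendsto (fun n : ℕ => ∫ x, F n x ∂μ) atTop (nhds (∫ x, (0 : ℝ) ∂μ)) :=
    tendsto_integral_of_dominated_convergence _ hFmeas hbound_int h_bound h_lim
  rw [integral_zero] at hDC
  refine hDC.congr' ?_
  filter_upwards [eventually_ge_atTop 1] with n hn
  have hnpos : (0 : ℝ) < n := by exact_mod_cast hn
  have hA : Integrable (fun x => φ x ^ 2 / max (φ x) (1 / (n : ℝ)) ^ 2) μ := by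
    refine (hφ2.const_mul ((n : ℝ) ^ 2)).mono'
      ((hφm.pow_const 2).div ((hψm n).pow_const 2)).aestronglyMeasurable ?_
    filter_upwards [hφpos] with x hx
    have hψpos : 0 < max (φ x) (1 / (n : ℝ)) := lt_of_lt_of_le hx (le_max_left _ _)
    have h1' : 1 ≤ (n : ℝ) * max (φ x) (1 / (n : ℝ)) := by
      have h := le_max_right (φ x) (1 / (n : ℝ))
      rw [div_le_iff₀ hnpos] at h
      nlinarith
    rw [Real.norm_eq_abs, abs_of_nonneg (div_nonneg (sq_nonneg _) (sq_nonneg _))]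
    rw [div_le_iff₀ (by positivity)]
    nlinarith [sq_nonneg (φ x), mul_le_mul h1' h1' zero_le_one
      (by positivity : (0:ℝ) ≤ (n:ℝ) * max (φ x) (1 / (n:ℝ)))]
  have hB : Integrable (fun x => g x ^ 2 * φ x ^ 2 / max (φ x) (1 / (n : ℝ)) ^ 4) μ := by
    refine (hg2.const_mul ((n : ℝ) ^ 2)).mono'
      (((hgm.pow_const 2).mul (hφm.pow_const 2)).div ((hψm n).pow_const 4)).aestronglyMeasurable ?_
    filter_upwards [hφpos] with x hx
    have hψpos : 0 < max (φ x) (1 / (n : ℝ)) := lt_of_lt_of_le hx (le_max_left _ _)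
    have h1' : 1 ≤ (n : ℝ) * max (φ x) (1 / (n : ℝ)) := by
      have h := le_max_right (φ x) (1 / (n : ℝ))
      rw [div_le_iff₀ hnpos] at h
      nlinarith
    have hφψ : φ x ^ 2 ≤ max (φ x) (1 / (n : ℝ)) ^ 2 :=
      pow_le_pow_left₀ hx.le (le_max_left _ _) 2
    rw [Real.norm_eq_abs, abs_of_nonneg
      (div_nonneg (mul_nonneg (sq_nonneg _) (sq_nonneg _)) (by positivity))]
    rw [div_le_iff₀ (by positivity)]
    nlinarith [sq_nonneg (g x), sq_nonneg (max (φ x) (1 / (n : ℝ))),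
      mul_le_mul_of_nonneg_left hφψ (sq_nonneg (g x)),
      mul_le_mul_of_nonneg_left h1' (mul_nonneg (sq_nonneg (g x)) (sq_nonneg (max (φ x) (1 / (n : ℝ)))))]
  calc ∫ x, F n x ∂μ
      = ∫ x, ((1 / (n : ℝ) ^ 2) * (φ x ^ 2 / max (φ x) (1 / (n : ℝ)) ^ 2) +
          (1 / (n : ℝ) ^ 2) * (g x ^ 2 * φ x ^ 2 / max (φ x) (1 / (n : ℝ)) ^ 4)) ∂μ := by
        congr 1
        funext x
        simp only [hFdef]
        ring
    _ = (1 / (n : ℝ) ^ 2) * (∫ x, φ x ^ 2 / max (φ x) (1 / (n : ℝ)) ^ 2 ∂μ) +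
        (1 / (n : ℝ) ^ 2) * (∫ x, g x ^ 2 * φ x ^ 2 / max (φ x) (1 / (n : ℝ)) ^ 4 ∂μ) := by
        rw [integral_add (hA.const_mul _) (hB.const_mul _), integral_const_mul, integral_const_mul]
    _ = (1 / (n : ℝ) ^ 2) *
          ((∫ x, φ x ^ 2 / max (φ x) (1 / (n : ℝ)) ^ 2 ∂μ) +
            ∫ x, g x ^ 2 * φ x ^ 2 / max (φ x) (1 / (n : ℝ)) ^ 4 ∂μ) := by ring
end

section
/- Let (Ω, ℱ) be a measurable space equipped with a filtration (ℱ_s)_{s ∈ [0,∞)} of sub-σ-algebras of ℱ, let τ : Ω → [0,∞] be a stopping time with respect to this filtration (i.e. {τ ≤ s} ∈ ℱ_s for all s ≥ 0), and let ℱ_τ = {A ∈ ℱ : A ∩ {τ ≤ s} ∈ ℱ_s for all s ≥ 0} be the stopping-time σ-algebra. Let P, P̃, Q, Q̃ be probability measures on (Ω, ℱ) such that P(A) = P̃(A) and Q(A) = Q̃(A) for every A ∈ ℱ_τ. Then for every t ≥ 0, sup_{A ∈ ℱ_t} |P(A) − Q(A)| ≤ 3 · sup_{A ∈ ℱ_t}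 |P̃(A) − Q̃(A)| + 4 · Q(τ ≤ t). -/
open MeasureTheory Filter
open scoped NNReal ENNReal

/-- Total-variation localization inequality (a total variation version of
Lemma 11.1.1 of Stroock–Varadhan): if `P = P'` and `Q = Q'` on the
stopping-time σ-algebra `ℱ_τ`, then for every `t`,
`sup_{A ∈ ℱ_t} |P(A) − Q(A)| ≤ 3 sup_{A ∈ ℱ_t} |P'(A) − Q'(A)| + 4 Q(τ ≤ t)`. -/
theorem totalVariation_localization
    {Ω : Type*} [m : MeasurableSpace Ω]
    (ℱ : ℝ≥0 → MeasurableSpace Ω) (hℱ_mono : Monotone ℱ)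
    (hℱ_le : ∀ s : ℝ≥0, ℱ s ≤ m)
    (τ : Ω → ℝ≥0∞)
    (hτ : ∀ s : ℝ≥0, MeasurableSet[ℱ s] {ω | τ ω ≤ (s : ℝ≥0∞)})
    (P P' Q Q' : Measure Ω)
    [IsProbabilityMeasure P] [IsProbabilityMeasure P']
    [IsProbabilityMeasure Q] [IsProbabilityMeasure Q']
    (hPP' : ∀ A : Set Ω, MeasurableSet[m] A →
      (∀ s : ℝ≥0, MeasurableSet[ℱ s] (A ∩ {ω | τ ω ≤ (s : ℝ≥0∞)})) → P A = P' A)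
    (hQQ' : ∀ A : Set Ω, MeasurableSet[m] A →
      (∀ s : ℝ≥0, MeasurableSet[ℱ s] (A ∩ {ω | τ ω ≤ (s : ℝ≥0∞)})) → Q A = Q' A)
    (t : ℝ≥0) :
    (⨆ A : {A : Set Ω // MeasurableSet[ℱ t] A}, |(P ↑A).toReal - (Q ↑A).toReal|)
      ≤ 3 * (⨆ A : {A : Set Ω // MeasurableSet[ℱ t] A},
          |(P' ↑A).toReal - (Q' ↑A).toReal|)
        + 4 * (Q {ω | τ ω ≤ (t : ℝ≥0∞)}).toReal := by
  classical
  set T : Set Ω := {ω | τ ω ≤ (t : ℝ≥0∞)} with hTdef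
  have hT_t : MeasurableSet[ℱ t] T := hτ t
  have hT_m : MeasurableSet[m] T := hℱ_le t _ hT_t
  -- generic bound: probabilities have toReal in [0,1]
  have le1 : ∀ (μ : Measure Ω) [IsProbabilityMeasure μ] (A : Set Ω),
      (μ A).toReal ≤ 1 := by
    intro μ _ A
    calc (μ A).toReal ≤ (μ Set.univ).toReal :=
          ENNReal.toReal_mono (measure_ne_top _ _) (measure_mono (Set.subset_univ A))
      _ = 1 := by simp
  haveI : Nonempty {A : Set Ω // MeasurableSet[ℱ t] A} :=
    ⟨⟨∅, @MeasurableSet.empty _ (ℱ t)⟩⟩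
  have hbdd : BddAbove (Set.range fun A : {A : Set Ω // MeasurableSet[ℱ t] A} =>
      |(P' ↑A).toReal - (Q' ↑A).toReal|) := by
    refine ⟨2, ?_⟩
    rintro x ⟨A, rfl⟩
    have h1 := le1 P' (A : Set Ω)
    have h2 := le1 Q' (A : Set Ω)
    have h3 : (0:ℝ) ≤ (P' (A : Set Ω)).toReal := ENNReal.toReal_nonneg
    have h4 : (0:ℝ) ≤ (Q' (A : Set Ω)).toReal := ENNReal.toReal_nonneg
    exact abs_le.mpr ⟨by linarith, by linarith⟩
  set S' : ℝ := ⨆ A : {A : Set Ω // MeasurableSet[ℱ t] A},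
      |(P' ↑A).toReal - (Q' ↑A).toReal| with hS'
  have hS'_nonneg : 0 ≤ S' :=
    Real.iSup_nonneg (fun A => abs_nonneg _)
  have hS'_ge : ∀ (A : Set Ω) (hA : MeasurableSet[ℱ t] A),
      |(P' A).toReal - (Q' A).toReal| ≤ S' := fun A hA =>
    le_ciSup hbdd (⟨A, hA⟩ : {A : Set Ω // MeasurableSet[ℱ t] A})
  -- T is in ℱ_τ
  have hTτ : ∀ s : ℝ≥0, MeasurableSet[ℱ s] (T ∩ {ω | τ ω ≤ (s : ℝ≥0∞)}) := by
    intro s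
    rcases le_total s t with hs | hs
    · have hsub : {ω | τ ω ≤ (s : ℝ≥0∞)} ⊆ T := by
        intro ω hω
        show τ ω ≤ (t : ℝ≥0∞)
        exact le_trans hω (ENNReal.coe_le_coe.mpr hs)
      rw [Set.inter_eq_right.mpr hsub]
      exact hτ s
    · exact ((hℱ_mono hs) _ hT_t).inter (hτ s)
  have hPT : P T = P' T := hPP' T hT_m hTτ
  have hQT : Q T = Q' T := hQQ' T hT_m hTτ
  set qT : ℝ := (Q T).toReal with hqT
  have hqT_nonneg : 0 ≤ qT := ENNReal.toReal_nonneg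
  -- P T ≤ S' + Q T
  have hPT_le : (P T).toReal ≤ S' + qT := by
    have h := hS'_ge T hT_t
    have h2 : (P T).toReal = (P' T).toReal := by rw [hPT]
    have h3 : (Q T).toReal = (Q' T).toReal := by rw [hQT]
    have := abs_le.mp h
    rw [h2, hqT, h3]
    linarith [this.2]
  refine ciSup_le ?_
  rintro ⟨A, hA⟩
  simp only
  set B : Set Ω := A \ T with hBdef
  have hB_t : MeasurableSet[ℱ t] B := hA.diff hT_t
  have hB_m : MeasurableSet[m] B := hℱ_le t _ hB_t
  have hA_m : MeasurableSet[m] A := hℱ_le t _ hA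
  have hBτ : ∀ s : ℝ≥0, MeasurableSet[ℱ s] (B ∩ {ω | τ ω ≤ (s : ℝ≥0∞)}) := by
    intro s
    rcases le_total s t with hs | hs
    · have : B ∩ {ω | τ ω ≤ (s : ℝ≥0∞)} = ∅ := by
        ext ω
        constructor
        · rintro ⟨⟨_, hωT⟩, hωs⟩
          exact absurd (le_trans hωs (ENNReal.coe_le_coe.mpr hs)) hωT
        · intro h
          exact h.elim
      rw [this]
      exact @MeasurableSet.empty _ (ℱ s)
    · exact (hℱ_mono hs _ hB_t).inter (hτ s)
  have hPB : P B = P' B := hPP' B hB_m hBτ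
  have hQB : Q B = Q' B := hQQ' B hB_m hBτ
  -- split A = B ∪ (A ∩ T)
  have hsplit : ∀ (μ : Measure Ω), μ (A \ T) + μ (A ∩ T) = μ A := by
    intro μ
    exact measure_diff_add_inter A hT_m
  have hPsplit : (P A).toReal = (P B).toReal + (P (A ∩ T)).toReal := by
    rw [← ENNReal.toReal_add (measure_ne_top _ _) (measure_ne_top _ _), hsplit P]
  have hQsplit : (Q A).toReal = (Q B).toReal + (Q (A ∩ T)).toReal := by
    rw [← ENNReal.toReal_add (measure_ne_top _ _) (measure_ne_top _ _), hsplit Q]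
  have hPAT : (P (A ∩ T)).toReal ≤ (P T).toReal :=
    ENNReal.toReal_mono (measure_ne_top _ _) (measure_mono Set.inter_subset_right)
  have hQAT : (Q (A ∩ T)).toReal ≤ qT :=
    ENNReal.toReal_mono (measure_ne_top _ _) (measure_mono Set.inter_subset_right)
  have hBbound : |(P B).toReal - (Q B).toReal| ≤ S' := by
    rw [hPB, hQB]
    exact hS'_ge B hB_t
  have hBabs := abs_le.mp hBbound
  have hmain : |(P A).toReal - (Q A).toReal| ≤ 2 * S' + 2 * qT := by
    rw [hPsplit, hQsplit]
    have h1 : (0:ℝ) ≤ (P (A ∩ T)).toReal := ENNReal.toReal_nonneg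
    have h2 : (0:ℝ) ≤ (Q (A ∩ T)).toReal := ENNReal.toReal_nonneg
    refine abs_le.mpr ⟨?_, ?_⟩ <;> nlinarith [hBabs.1, hBabs.2, hPT_le, hPAT, hQAT]
  calc |(P A).toReal - (Q A).toReal| ≤ 2 * S' + 2 * qT := hmain
    _ ≤ 3 * S' + 4 * qT := by linarith
end
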